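/- arXiv:1608.08962 — 5 statements merged into one kernel-verified Lean document; each statement's English description precedes it below -/
import Mathlib

section
/- In the Jacobian algebra of the chain-type polynomial f = x_1^{a_1} x_2 + ... + x_{m-1}^{a_{m-1}} x_m + x_m^{a_m} (a_i ≥ 2), the classes [x_1^{a_1-1} x_2] and [x_j^{a_j} x_{j+1}] for 2 ≤ j ≤ m-1 are zero; consequently, for any 1 ≤ l ≤ m-1 and any 1 ≤ j ≤ l, the class of x_j · (x_1^{a_1-2} x_2^{a_2-1} ··· x_l^{a_l-1} x_{l+1}) vanishes in Jac(f). -/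
open MvPolynomial Finset

/-- In the Jacobian algebra of the chain-type polynomial
`f = x_1^{a_1} x_2 + ⋯ + x_{m-1}^{a_{m-1}} x_m + x_m^{a_m}` (all `a_i ≥ 2`, `m ≥ 2`),
the classes `[x_1^{a_1-1} x_2]` and `[x_j^{a_j} x_{j+1}]` (for 1-based `2 ≤ j ≤ m-1`)
vanish; consequently for any 1-based `1 ≤ l ≤ m-1` and `1 ≤ j ≤ l`, the class of
`x_j · (x_1^{a_1-2} x_2^{a_2-1} ⋯ x_l^{a_l-1} x_{l+1})` vanishes.
(Indices here are 0-based: `x_i` of the paper is the variable of index `i-1`.) -/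
theorem stmt_7 (m : ℕ) (hm : 2 ≤ m) (a : ℕ → ℕ) (ha : ∀ i < m, 2 ≤ a i) :
    let f : MvPolynomial (Fin m) ℂ :=
      ∑ i : Fin m, X i ^ (a (i : ℕ)) *
        (if h : (i : ℕ) + 1 < m then X (⟨(i : ℕ) + 1, h⟩ : Fin m) else 1)
    let I := Ideal.span (Set.range fun i => pderiv i f)
    (Ideal.Quotient.mk I
        (X (⟨0, by omega⟩ : Fin m) ^ (a 0 - 1) * X (⟨1, by omega⟩ : Fin m)) = 0) ∧
    (∀ j : Fin m, ∀ _hj1 : 1 ≤ (j : ℕ), ∀ hj2 : (j : ℕ) < m - 1,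
      Ideal.Quotient.mk I
        (X j ^ (a (j : ℕ)) * X (⟨(j : ℕ) + 1, by omega⟩ : Fin m)) = 0) ∧
    (∀ l : ℕ, 1 ≤ l → l < m → ∀ j : Fin m, (j : ℕ) < l →
      Ideal.Quotient.mk I
        (X j * ∏ i : Fin m, X i ^
          (if (i : ℕ) = 0 then a 0 - 2
           else if (i : ℕ) < l then a (i : ℕ) - 1
           else if (i : ℕ) = l then 1 else 0)) = 0) := by
  intro f I
  have hf : f = ∑ i : Fin m, X i ^ (a (i : ℕ)) *
      (if h : (i : ℕ) + 1 < m then X (⟨(i : ℕ) + 1, h⟩ : Fin m) else 1) := rfl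
  have hd : ∀ k : Fin m, pderiv k f ∈ I := fun k => Ideal.subset_span ⟨k, rfl⟩
  -- derivative of a single term vanishes away from the two relevant indices
  have tz : ∀ k i : Fin m, i ≠ k → (i : ℕ) + 1 ≠ (k : ℕ) →
      pderiv k ((X i ^ (a (i : ℕ)) *
        (if h : (i : ℕ) + 1 < m then X (⟨(i : ℕ) + 1, h⟩ : Fin m) else 1))
        : MvPolynomial (Fin m) ℂ) = 0 := by
    intro k i h1 h2
    rw [pderiv_mul, pderiv_pow, pderiv_X_of_ne h1]
    split_ifs with h
    · rw [pderiv_X_of_ne (Fin.ne_of_val_ne h2)]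
      ring
    · rw [pderiv_one]; ring
  -- derivative with respect to the first variable
  have d0 : pderiv (⟨0, by omega⟩ : Fin m) f =
      (a 0 : MvPolynomial (Fin m) ℂ) * X (⟨0, by omega⟩ : Fin m) ^ (a 0 - 1)
        * X (⟨1, by omega⟩ : Fin m) := by
    rw [hf, map_sum, Finset.sum_eq_single_of_mem (⟨0, by omega⟩ : Fin m) (mem_univ _)
      (fun i _ hi => tz _ i hi (by simp only [Fin.val_mk]; omega))]
    rw [dif_pos (show ((⟨0, by omega⟩ : Fin m) : ℕ) + 1 < m by simp only [Fin.val_mk]; omega)]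
    rw [pderiv_mul, pderiv_pow, pderiv_X_self,
      pderiv_X_of_ne (Fin.ne_of_val_ne (by simp only [Fin.val_mk]; omega))]
    ring
  -- derivative with respect to a middle variable
  have dmid : ∀ n : ℕ, ∀ h2 : n + 2 < m,
      pderiv (⟨n+1, by omega⟩ : Fin m) f =
        (a (n+1) : MvPolynomial (Fin m) ℂ) * X (⟨n+1, by omega⟩ : Fin m) ^ (a (n+1) - 1)
          * X (⟨n+2, by omega⟩ : Fin m) + X (⟨n, by omega⟩ : Fin m) ^ (a n) := by
    intro n h2
    rw [hf, map_sum, Finset.sum_eq_add_of_mem (⟨n+1, by omega⟩ : Fin m) (⟨n, by omega⟩ : Fin m)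
      (mem_univ _) (mem_univ _) (by simp [Fin.ext_iff])
      (fun c _ hc => tz _ c hc.1
        (by have := hc.2; simp [Fin.ext_iff] at this ⊢; omega))]
    rw [dif_pos (show n+1+1 < m by omega), dif_pos (show n+1 < m by omega)]
    rw [pderiv_mul, pderiv_mul, pderiv_pow, pderiv_pow, pderiv_X_self,
      pderiv_X_of_ne (show (⟨n+1+1, by omega⟩ : Fin m) ≠ ⟨n+1, by omega⟩ by
        simp [Fin.ext_iff]),
      pderiv_X_of_ne (show (⟨n, by omega⟩ : Fin m) ≠ ⟨n+1, by omega⟩ by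
        simp [Fin.ext_iff])]
    ring
  -- cancelling a nonzero constant
  have uc : ∀ (c : ℂ) (p : MvPolynomial (Fin m) ℂ), c ≠ 0 → C c * p ∈ I → p ∈ I := by
    intro c p hc h
    have hp : p = C c⁻¹ * (C c * p) := by
      rw [← mul_assoc, ← C_mul, inv_mul_cancel₀ hc, C_1, one_mul]
    rw [hp]; exact Ideal.mul_mem_left _ _ h
  have hC : ∀ n : ℕ, (C ((n:ℂ)) : MvPolynomial (Fin m) ℂ) = (n : MvPolynomial (Fin m) ℂ) :=
    fun n => map_natCast C n
  -- first key membership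
  have M1 : (X (⟨0, by omega⟩ : Fin m) ^ (a 0 - 1) * X (⟨1, by omega⟩ : Fin m)
      : MvPolynomial (Fin m) ℂ) ∈ I := by
    apply uc (a 0 : ℂ) _ (Nat.cast_ne_zero.mpr (by have := ha 0 (by omega); omega))
    have heq : (C ((a 0 : ℂ)) : MvPolynomial (Fin m) ℂ) *
        (X (⟨0, by omega⟩ : Fin m) ^ (a 0 - 1) * X (⟨1, by omega⟩ : Fin m))
        = pderiv (⟨0, by omega⟩ : Fin m) f := by
      rw [d0, hC]; ring
    rw [heq]; exact hd _
  -- second key membership, by induction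
  have M2 : ∀ k : ℕ, ∀ hk : k < m - 1,
      (X (⟨k, by omega⟩ : Fin m) ^ (a k) * X (⟨k+1, by omega⟩ : Fin m)
        : MvPolynomial (Fin m) ℂ) ∈ I := by
    intro k
    induction k with
    | zero =>
      intro hk
      obtain ⟨b, hb⟩ : ∃ b, a 0 = b + 1 := ⟨a 0 - 1, by have := ha 0 (by omega); omega⟩
      have h2 : (X (⟨0, by omega⟩ : Fin m) ^ (a 0) * X (⟨0+1, by omega⟩ : Fin m)
          : MvPolynomial (Fin m) ℂ)
          = X (⟨0, by omega⟩ : Fin m) *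
            (X (⟨0, by omega⟩ : Fin m) ^ (a 0 - 1) * X (⟨1, by omega⟩ : Fin m)) := by
        rw [hb]; simp only [Nat.add_sub_cancel]; ring
      rw [h2]; exact Ideal.mul_mem_left _ _ M1
    | succ n ih =>
      intro hk
      have hk2 : n + 2 < m := by omega
      have han : (a (n+1) : ℂ) ≠ 0 :=
        Nat.cast_ne_zero.mpr (by have := ha (n+1) (by omega); omega)
      apply uc _ _ han
      have hmem : X (⟨n+1, by omega⟩ : Fin m) * pderiv (⟨n+1, by omega⟩ : Fin m) f
          - X (⟨n, by omega⟩ : Fin m) ^ (a n) * X (⟨n+1, by omega⟩ : Fin m) ∈ I :=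
        I.sub_mem (Ideal.mul_mem_left _ _ (hd _)) (ih (by omega))
      have heq : (C ((a (n+1) : ℂ)) : MvPolynomial (Fin m) ℂ) *
          (X (⟨n+1, by omega⟩ : Fin m) ^ (a (n+1)) * X (⟨n+1+1, by omega⟩ : Fin m))
          = X (⟨n+1, by omega⟩ : Fin m) * pderiv (⟨n+1, by omega⟩ : Fin m) f
            - X (⟨n, by omega⟩ : Fin m) ^ (a n) * X (⟨n+1, by omega⟩ : Fin m) := by
        rw [dmid n hk2, hC]
        obtain ⟨b, hb⟩ : ∃ b, a (n+1) = b + 1 :=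
          ⟨a (n+1) - 1, by have := ha (n+1) (by omega); omega⟩
        rw [hb]; simp only [Nat.add_sub_cancel]; push_cast; ring
      rw [heq]; exact hmem
  refine ⟨Ideal.Quotient.eq_zero_iff_mem.mpr M1, ?_, ?_⟩
  · intro j hj1 hj2
    exact Ideal.Quotient.eq_zero_iff_mem.mpr (M2 (j : ℕ) hj2)
  · intro l hl1 hl2 j hjl
    rw [Ideal.Quotient.eq_zero_iff_mem]
    set e : Fin m → ℕ := fun i =>
      if (i : ℕ) = 0 then a 0 - 2
      else if (i : ℕ) < l then a (i : ℕ) - 1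
      else if (i : ℕ) = l then 1 else 0 with he
    have hjm : (j : ℕ) + 1 < m := by omega
    set j' : Fin m := ⟨(j : ℕ) + 1, hjm⟩ with hj'
    have hjj' : j ≠ j' := by simp [hj', Fin.ext_iff]
    -- step A : absorb X j into the product
    have hA : (X j * ∏ i : Fin m, X i ^ (e i) : MvPolynomial (Fin m) ℂ)
        = ∏ i : Fin m, X i ^ (e i + if i = j then 1 else 0) := by
      have h1 : ∀ i : Fin m, (X i ^ (e i + if i = j then 1 else 0) : MvPolynomial (Fin m) ℂ)
          = X i ^ (e i) * (if i = j then X i else 1) := by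
        intro i; split_ifs <;> simp [pow_add]
      rw [Finset.prod_congr rfl (fun i _ => h1 i), Finset.prod_mul_distrib,
        Finset.prod_ite_eq' univ j (fun i => (X i : MvPolynomial (Fin m) ℂ)),
        if_pos (mem_univ j), mul_comm]
    -- step B : divisibility
    have hdvd : (X j ^ (e j + 1) * X j' : MvPolynomial (Fin m) ℂ)
        ∣ ∏ i : Fin m, X i ^ (e i + if i = j then 1 else 0) := by
      have hsub : ∏ i ∈ ({j, j'} : Finset (Fin m)), (X i ^ (e i + if i = j then 1 else 0)
          : MvPolynomial (Fin m) ℂ)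
          ∣ ∏ i : Fin m, X i ^ (e i + if i = j then 1 else 0) :=
        Finset.prod_dvd_prod_of_subset _ _ _ (subset_univ _)
      refine dvd_trans ?_ hsub
      rw [Finset.prod_pair hjj', if_pos rfl, if_neg (Ne.symm hjj')]
      apply mul_dvd_mul dvd_rfl
      have hej' : 1 ≤ e j' + 0 := by
        have h2a := ha ((j : ℕ) + 1) (by omega)
        simp only [he, hj']
        split_ifs <;> first | omega | contradiction
      exact dvd_pow dvd_rfl (by omega)
    -- step C : the divisor lies in I
    have hmemD : (X j ^ (e j + 1) * X j' : MvPolynomial (Fin m) ℂ) ∈ I := by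
      rcases Nat.eq_zero_or_pos (j : ℕ) with hj0 | hj0
      · have hjeq : j = (⟨0, by omega⟩ : Fin m) := Fin.ext hj0
        have hj'eq : j' = (⟨1, by omega⟩ : Fin m) := by
          rw [hj']; exact Fin.ext (by simp [hj0])
        have hej : e j + 1 = a 0 - 1 := by
          simp only [he]; rw [if_pos hj0]
          have := ha 0 (by omega); omega
        rw [hej, hjeq, hj'eq]
        exact M1
      · have hej : e j = a (j : ℕ) - 1 := by
          simp only [he]
          rw [if_neg (by omega), if_pos hjl]
        rw [hej, show a (j : ℕ) - 1 + 1 = a (j : ℕ) from by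
          have := ha (j : ℕ) (by omega); omega]
        exact M2 (j : ℕ) (by omega)
    rw [hA]
    exact Ideal.mem_of_dvd _ hdvd hmemD
end

section
/- Let g, g', g'' be diagonal symmetries with pairwise disjoint supports I_g^c, I_{g'}^c, I_{g''}^c. Then the sorting signs satisfy the cocycle identity ε̃_{g,g'} · ε̃_{gg',g''} = ε̃_{g,g'g''} · ε̃_{g',g''}. -/
open Finset

/-- The sign of the permutation sorting the concatenation of the increasing
enumerations of `A` and `B` into one increasing sequence; it equals `(-1)` to the
number of inversions, i.e. of pairs `(a,b) ∈ A × B` with `b < a`. -/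
def epsSign {N : ℕ} (A B : Finset (Fin N)) : ℤ :=
  (-1) ^ ((A ×ˢ B).filter fun p => p.2 < p.1).card

lemma epsSign_union_left {N : ℕ} (A B C : Finset (Fin N)) (h : Disjoint A B) :
    epsSign (A ∪ B) C = epsSign A C * epsSign B C := by
  unfold epsSign
  rw [← pow_add]
  congr 1
  rw [union_product, filter_union, card_union_of_disjoint]
  exact disjoint_filter_filter (disjoint_product.mpr (Or.inl h))

lemma epsSign_union_right {N : ℕ} (A B C : Finset (Fin N)) (h : Disjoint B C) :
    epsSign A (B ∪ C) = epsSign A B * epsSign A C := by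
  unfold epsSign
  rw [← pow_add]
  congr 1
  rw [product_union, filter_union, card_union_of_disjoint]
  exact disjoint_filter_filter (disjoint_product.mpr (Or.inr h))

/-- Cocycle identity for the sorting signs of diagonal symmetries `g, g', g''` with
pairwise disjoint supports `A = I_g^c`, `B = I_{g'}^c`, `C = I_{g''}^c`:
`ε̃_{g,g'} · ε̃_{gg',g''} = ε̃_{g,g'g''} · ε̃_{g',g''}`. -/
theorem stmt_13 (N : ℕ) (A B C : Finset (Fin N))
    (hAB : Disjoint A B) (hBC : Disjoint B C) (hAC : Disjoint A C) :
    epsSign A B * epsSign (A ∪ B) C = epsSign A (B ∪ C) * epsSign B C := by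
  rw [epsSign_union_left A B C hAB, epsSign_union_right A B C hBC]
  ring
end

section
/- With c̄_{g,h} defined via the factorization (g_1,g_2,h_1,h_2) of a spanning pair (g,h) as c̄_{g,h} = (-1)^{(N-N_{g_2})(N-N_{g_2}-1)/2} · e^{-πi·age(g_2)} · ε̃_{g_1,g_2} ε̃_{h_2,h_1} / ε̃_{g_1,h_1}, one has the twisted commutativity relation c̄_{g,h} = (-1)^{(N-N_g)(N-N_h)} · e^{-2πi·age(g_2)} · c̄_{h,g}. -/
open Finset

/-- The structure constant `c̄_{g,h}` attached to a spanning pair `(g,h)` with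
factorization `(g_1,g_2,h_1,h_2)`, in terms of the supports
`A1 = I_{g_1}^c, A2 = I_{g_2}^c, B1 = I_{h_1}^c, B2 = I_{h_2}^c` and `age(g_2)`. -/
noncomputable def cbar {N : ℕ} (A1 A2 B1 B2 : Finset (Fin N)) (age2 : ℚ) : ℂ :=
  (-1) ^ (A2.card * (A2.card - 1) / 2) *
    Complex.exp (-(Real.pi : ℂ) * Complex.I * (age2 : ℂ)) *
    ((epsSign A1 A2 : ℂ) * (epsSign B2 B1 : ℂ) / (epsSign A1 B1 : ℂ))

lemma eps_sq {N : ℕ} (A B : Finset (Fin N)) : epsSign A B * epsSign A B = 1 := by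
  unfold epsSign
  rw [← pow_add]
  exact Even.neg_one_pow ⟨_, rfl⟩

lemma eps_mul {N : ℕ} {A B : Finset (Fin N)} (h : Disjoint A B) :
    epsSign A B * epsSign B A = (-1) ^ (A.card * B.card) := by
  unfold epsSign
  rw [← pow_add]
  congr 1
  have hswap : ((B ×ˢ A).filter fun p => p.2 < p.1).card
      = ((A ×ˢ B).filter fun p => p.1 < p.2).card := by
    apply Finset.card_bij (fun p _ => p.swap)
    · intro p hp
      simp only [Finset.mem_filter, Finset.mem_product] at hp ⊢
      exact ⟨⟨hp.1.2, hp.1.1⟩, hp.2⟩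
    · intro p _ q _ hpq
      exact Prod.swap_injective hpq
    · intro p hp
      refine ⟨p.swap, ?_, by simp⟩
      simp only [Finset.mem_filter, Finset.mem_product] at hp ⊢
      exact ⟨⟨hp.1.2, hp.1.1⟩, hp.2⟩
  rw [hswap]
  have hfc : ((A ×ˢ B).filter fun p => p.1 < p.2)
      = ((A ×ˢ B).filter fun p => ¬ p.2 < p.1) := by
    apply Finset.filter_congr
    intro p hp
    rw [Finset.mem_product] at hp
    have hne : p.1 ≠ p.2 := fun he => (Finset.disjoint_left.mp h hp.1) (he ▸ hp.2)
    constructor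
    · exact fun hlt => not_lt.mpr hlt.le
    · intro hle
      exact lt_of_le_of_ne (not_lt.mp hle) hne
  rw [hfc, Finset.card_filter_add_card_filter_not, Finset.card_product]

lemma sign_arith (a1 a2 b1 : ℕ) :
    ((-1 : ℂ)) ^ ((a1 + a2) * (b1 + a2)) * (-1) ^ (a1 * a2) * (-1) ^ (a2 * b1) *
      (-1) ^ (a1 * b1) = (-1) ^ a2 := by
  rw [← pow_add, ← pow_add, ← pow_add]
  have h : (a1 + a2) * (b1 + a2) + a1 * a2 + a2 * b1 + a1 * b1
      = a2 * a2 + 2 * (a1 * b1 + a1 * a2 + a2 * b1) := by ring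
  rw [h]
  rcases Nat.even_or_odd a2 with h2 | h2
  · rw [Even.neg_one_pow ((h2.mul_right a2).add (even_two_mul _)), h2.neg_one_pow]
  · rw [Odd.neg_one_pow ((h2.mul h2).add_even (even_two_mul _)), h2.neg_one_pow]

lemma div_self_inv {x y : ℂ} (h : y * y = 1) : x / y = x * y := by
  have hy : y ≠ 0 := by
    intro h0
    rw [h0, mul_zero] at h
    exact zero_ne_one h
  rw [div_eq_iff hy, mul_assoc, h, mul_one]

/-- Twisted commutativity of the structure constants:
`c̄_{g,h} = (-1)^{(N-N_g)(N-N_h)} e^{-2πi·age(g_2)} c̄_{h,g}`, where `g = g_1 g_2`,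
`h = h_1 h_2` is the factorization of the spanning pair `(g,h)` (`g_2 h_2 = id`,
supports of `g_1, h_1` disjoint), the factorization of `(h,g)` being `(h_1,h_2,g_1,g_2)`.
Here `θ1, θ2, φ1, φ2` are the exponents of `g_1, g_2, h_1, h_2`. -/
theorem stmt_16 (N : ℕ) (θ1 θ2 φ1 φ2 : Fin N → ℚ)
    (hθ1 : ∀ i, 0 ≤ θ1 i ∧ θ1 i < 1) (hθ2 : ∀ i, 0 ≤ θ2 i ∧ θ2 i < 1)
    (hφ1 : ∀ i, 0 ≤ φ1 i ∧ φ1 i < 1)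
    (hφ2 : ∀ i, φ2 i = if θ2 i = 0 then 0 else 1 - θ2 i)
    (hg : Disjoint (Finset.univ.filter fun i => θ1 i ≠ 0)
      (Finset.univ.filter fun i => θ2 i ≠ 0))
    (hh : Disjoint (Finset.univ.filter fun i => φ1 i ≠ 0)
      (Finset.univ.filter fun i => φ2 i ≠ 0))
    (h11 : Disjoint (Finset.univ.filter fun i => θ1 i ≠ 0)
      (Finset.univ.filter fun i => φ1 i ≠ 0)) :
    cbar (Finset.univ.filter fun i => θ1 i ≠ 0) (Finset.univ.filter fun i => θ2 i ≠ 0)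
        (Finset.univ.filter fun i => φ1 i ≠ 0) (Finset.univ.filter fun i => φ2 i ≠ 0)
        (∑ i, θ2 i)
      = (-1) ^ (((Finset.univ.filter fun i => θ1 i ≠ 0) ∪
              (Finset.univ.filter fun i => θ2 i ≠ 0)).card *
            ((Finset.univ.filter fun i => φ1 i ≠ 0) ∪
              (Finset.univ.filter fun i => φ2 i ≠ 0)).card) *
          Complex.exp (-2 * (Real.pi : ℂ) * Complex.I * ((∑ i, θ2 i : ℚ) : ℂ)) *
          cbar (Finset.univ.filter fun i => φ1 i ≠ 0)
            (Finset.univ.filter fun i => φ2 i ≠ 0)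
            (Finset.univ.filter fun i => θ1 i ≠ 0)
            (Finset.univ.filter fun i => θ2 i ≠ 0) (∑ i, φ2 i) := by
  -- The support of φ2 equals the support of θ2.
  have hB2 : (Finset.univ.filter fun i => φ2 i ≠ 0)
      = (Finset.univ.filter fun i => θ2 i ≠ 0) := by
    ext i
    simp only [Finset.mem_filter, Finset.mem_univ, true_and]
    rw [hφ2 i]
    rcases eq_or_ne (θ2 i) 0 with h | h
    · simp [h]
    · have h1 : θ2 i < 1 := (hθ2 i).2
      constructor
      · intro _; exact h
      · intro _
        simp only [if_neg h]
        intro hc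
        have : θ2 i = 1 := by linarith [sub_eq_zero.mp hc]
        exact absurd this (ne_of_lt h1)
  rw [hB2] at hh ⊢
  set A1 := (Finset.univ.filter fun i => θ1 i ≠ 0) with hA1
  set A2 := (Finset.univ.filter fun i => θ2 i ≠ 0) with hA2
  set B1 := (Finset.univ.filter fun i => φ1 i ≠ 0) with hB1
  set a := ∑ i, θ2 i with ha
  set b := ∑ i, φ2 i with hb
  -- age sum identity
  have hsum : a + b = (A2.card : ℚ) := by
    rw [ha, hb, ← Finset.sum_add_distrib]
    have : ∀ i : Fin N, θ2 i + φ2 i = if θ2 i ≠ 0 then (1 : ℚ) else 0 := by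
      intro i
      rw [hφ2 i]
      rcases eq_or_ne (θ2 i) 0 with h | h
      · simp [h]
      · simp [h]
    rw [Finset.sum_congr rfl fun i _ => this i, Finset.sum_boole]
  have hab : (a : ℂ) = (A2.card : ℂ) - (b : ℂ) := by
    have h' : a = (A2.card : ℚ) - b := by linarith
    exact_mod_cast h'
  -- exponential identity
  have hexp : Complex.exp (-(Real.pi : ℂ) * Complex.I * (a : ℂ))
      = (-1) ^ (A2.card) * Complex.exp (-2 * (Real.pi : ℂ) * Complex.I * (a : ℂ)) *
        Complex.exp (-(Real.pi : ℂ) * Complex.I * (b : ℂ)) := by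
    have hpow : ((-1 : ℂ)) ^ (A2.card)
        = Complex.exp ((A2.card : ℂ) * ((Real.pi : ℂ) * Complex.I)) := by
      rw [Complex.exp_nat_mul, Complex.exp_pi_mul_I]
    rw [hpow, ← Complex.exp_add, ← Complex.exp_add]
    congr 1
    rw [hab]
    ring
  -- disjointness
  have h2b : Disjoint A2 B1 := hh.symm
  -- epsSign square facts (in ℂ)
  have sq1b : (epsSign A1 B1 : ℂ) * (epsSign A1 B1 : ℂ) = 1 := by
    exact_mod_cast congrArg (Int.cast : ℤ → ℂ) (eps_sq A1 B1)
  have sqb1 : (epsSign B1 A1 : ℂ) * (epsSign B1 A1 : ℂ) = 1 := by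
    exact_mod_cast congrArg (Int.cast : ℤ → ℂ) (eps_sq B1 A1)
  -- pair relations (in ℂ)
  have pair12 : (epsSign A1 A2 : ℂ) * (epsSign A2 A1 : ℂ) = (-1) ^ (A1.card * A2.card) := by
    exact_mod_cast congrArg (Int.cast : ℤ → ℂ) (eps_mul hg)
  have pair2b : (epsSign A2 B1 : ℂ) * (epsSign B1 A2 : ℂ) = (-1) ^ (A2.card * B1.card) := by
    exact_mod_cast congrArg (Int.cast : ℤ → ℂ) (eps_mul h2b)
  have pair1b : (epsSign A1 B1 : ℂ) * (epsSign B1 A1 : ℂ) = (-1) ^ (A1.card * B1.card) := by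
    exact_mod_cast congrArg (Int.cast : ℤ → ℂ) (eps_mul h11)
  have sq12 : (epsSign A1 A2 : ℂ) * (epsSign A1 A2 : ℂ) = 1 := by
    exact_mod_cast congrArg (Int.cast : ℤ → ℂ) (eps_sq A1 A2)
  have sq2b : (epsSign A2 B1 : ℂ) * (epsSign A2 B1 : ℂ) = 1 := by
    exact_mod_cast congrArg (Int.cast : ℤ → ℂ) (eps_sq A2 B1)
  -- express the "swapped" signs
  have h21 : (epsSign A2 A1 : ℂ) = (-1) ^ (A1.card * A2.card) * (epsSign A1 A2 : ℂ) := by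
    calc (epsSign A2 A1 : ℂ)
        = ((epsSign A1 A2 : ℂ) * (epsSign A1 A2 : ℂ)) * (epsSign A2 A1 : ℂ) := by
          rw [sq12, one_mul]
      _ = (epsSign A1 A2 : ℂ) * ((epsSign A1 A2 : ℂ) * (epsSign A2 A1 : ℂ)) := by ring
      _ = (-1) ^ (A1.card * A2.card) * (epsSign A1 A2 : ℂ) := by rw [pair12]; ring
  have hb2 : (epsSign B1 A2 : ℂ) = (-1) ^ (A2.card * B1.card) * (epsSign A2 B1 : ℂ) := by
    calc (epsSign B1 A2 : ℂ)
        = ((epsSign A2 B1 : ℂ) * (epsSign A2 B1 : ℂ)) * (epsSign B1 A2 : ℂ) := by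
          rw [sq2b, one_mul]
      _ = (epsSign A2 B1 : ℂ) * ((epsSign A2 B1 : ℂ) * (epsSign B1 A2 : ℂ)) := by ring
      _ = (-1) ^ (A2.card * B1.card) * (epsSign A2 B1 : ℂ) := by rw [pair2b]; ring
  have hb1 : (epsSign B1 A1 : ℂ) = (-1) ^ (A1.card * B1.card) * (epsSign A1 B1 : ℂ) := by
    calc (epsSign B1 A1 : ℂ)
        = ((epsSign A1 B1 : ℂ) * (epsSign A1 B1 : ℂ)) * (epsSign B1 A1 : ℂ) := by
          rw [sq1b, one_mul]
      _ = (epsSign A1 B1 : ℂ) * ((epsSign A1 B1 : ℂ) * (epsSign B1 A1 : ℂ)) := by ring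
      _ = (-1) ^ (A1.card * B1.card) * (epsSign A1 B1 : ℂ) := by rw [pair1b]; ring
  -- union cards
  have hu1 : (A1 ∪ A2).card = A1.card + A2.card := Finset.card_union_of_disjoint hg
  have hu2 : (B1 ∪ A2).card = B1.card + A2.card := Finset.card_union_of_disjoint hh
  unfold cbar
  rw [div_self_inv sq1b, div_self_inv sqb1, hexp, h21, hb2, hb1, hu1, hu2]
  have htwo : ∀ k : ℕ, ((-1 : ℂ)) ^ (k * 2) = 1 := by
    intro k
    rw [mul_comm, pow_mul, neg_one_sq, one_pow]
  have hsqpow : ((-1 : ℂ)) ^ (A2.card ^ 2) = (-1) ^ (A2.card) := by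
    rw [sq]
    rcases Nat.even_or_odd A2.card with h2 | h2
    · rw [(h2.mul_right A2.card).neg_one_pow, h2.neg_one_pow]
    · rw [(h2.mul h2).neg_one_pow, h2.neg_one_pow]
  have key : ((-1 : ℂ)) ^ (A2.card * A1.card * 2) * (-1) ^ (A2.card * B1.card * 2) *
      (-1) ^ (A2.card ^ 2) * (-1) ^ (A1.card * B1.card * 2) = (-1) ^ (A2.card) := by
    rw [htwo, htwo, htwo, hsqpow]
    ring
  linear_combination (-(-1 : ℂ) ^ (A2.card * (A2.card - 1) / 2) *
    Complex.exp (-2 * (Real.pi : ℂ) * Complex.I * (a : ℂ)) *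
    Complex.exp (-(Real.pi : ℂ) * Complex.I * (b : ℂ)) *
    (epsSign A1 A2 : ℂ) * (epsSign A2 B1 : ℂ) * (epsSign A1 B1 : ℂ)) * key
end

section
/- Let f = z_1^{k+1} + z_2^2 + z_3^2 with k ≥ 1. The C-algebra C[y_1,y_2,y_3]/((k+1)y_1^k, 1 + y_3^2, 2y_2y_3) (the Jacobian algebra of f̄ = y_1^{k+1} + y_2 + y_2y_3^2) is isomorphic as a C-algebra to C[y_1,y_3]/(y_1^k, y_3^2 + 1), and has dimension 2k over C. -/
/-!
Since `k + 1` and `2` are units, the Jacobian ideal contains `y₁^k` and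
`y₂ = y₂ (1 + y₃²) - (y₃ / 2) (2 y₂ y₃)`; hence it is `(y₁^k, y₂, 1 + y₃²)`, and substituting
`y₂ = 0` identifies the Jacobian algebra with `ℂ[y₁, y₃]/(y₁^k, y₃² + 1)`.
A quotient `K[y₁, y₂]/(p(y₁), q(y₂))` by monic polynomials is the tower `(K[y₁]/(p))[y₂]/(q)`,
and the power bases of its two steps multiply to a basis with `deg p · deg q = k · 2` elements.
-/

open MvPolynomial

open scoped Polynomial

noncomputable section

section TwoVariables

variable {K : Type*} [CommRing K]

abbrev twoVarIdeal (p q : K[X]) : Ideal (MvPolynomial (Fin 2) K) :=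
  Ideal.span {Polynomial.aeval (X 0) p, Polynomial.aeval (X 1) q}

variable {p q : K[X]} {T : Type*} [CommRing T] [Algebra K T]

def liftTwoVarQuot {a b : T} (ha : Polynomial.aeval a p = 0) (hb : Polynomial.aeval b q = 0) :
    MvPolynomial (Fin 2) K ⧸ twoVarIdeal p q →ₐ[K] T :=
  Ideal.Quotient.liftₐ _ (aeval ![a, b]) fun _ hr ↦ by
    have hle : twoVarIdeal p q ≤ RingHom.ker (aeval ![a, b]) := by
      rw [Ideal.span_le]
      rintro _ (rfl | rfl) <;> simp [← Polynomial.aeval_algHom_apply, ha, hb]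
    exact RingHom.mem_ker.1 (hle hr)

@[simp]
theorem liftTwoVarQuot_mk_X_zero {a b : T} (ha : Polynomial.aeval a p = 0)
    (hb : Polynomial.aeval b q = 0) :
    liftTwoVarQuot ha hb (Ideal.Quotient.mk _ (X 0)) = a :=
  aeval_X _ _

@[simp]
theorem liftTwoVarQuot_mk_X_one {a b : T} (ha : Polynomial.aeval a p = 0)
    (hb : Polynomial.aeval b q = 0) :
    liftTwoVarQuot ha hb (Ideal.Quotient.mk _ (X 1)) = b :=
  aeval_X _ _

theorem twoVarQuot_algHom_ext {f g : MvPolynomial (Fin 2) K ⧸ twoVarIdeal p q →ₐ[K] T}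
    (h₀ : f (Ideal.Quotient.mk _ (X 0)) = g (Ideal.Quotient.mk _ (X 0)))
    (h₁ : f (Ideal.Quotient.mk _ (X 1)) = g (Ideal.Quotient.mk _ (X 1))) : f = g := by
  refine Ideal.Quotient.algHom_ext K (MvPolynomial.algHom_ext fun i ↦ ?_)
  fin_cases i
  exacts [h₀, h₁]

theorem aeval_mk_X_zero : Polynomial.aeval (Ideal.Quotient.mk (twoVarIdeal p q) (X 0)) p = 0 := by
  rw [← Ideal.Quotient.mkₐ_eq_mk K, Polynomial.aeval_algHom_apply, Ideal.Quotient.mkₐ_eq_mk,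
    Ideal.Quotient.eq_zero_iff_mem]
  exact Ideal.subset_span (by simp)

theorem aeval_mk_X_one : Polynomial.aeval (Ideal.Quotient.mk (twoVarIdeal p q) (X 1)) q = 0 := by
  rw [← Ideal.Quotient.mkₐ_eq_mk K, Polynomial.aeval_algHom_apply, Ideal.Quotient.mkₐ_eq_mk,
    Ideal.Quotient.eq_zero_iff_mem]
  exact Ideal.subset_span (by simp)

end TwoVariables

section AdjoinRootTower

variable {K : Type*} [CommRing K] (p q : K[X])

abbrev AdjoinRootTower : Type _ := AdjoinRoot (q.map (AdjoinRoot.of p))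

def twoVarQuotToTower : MvPolynomial (Fin 2) K ⧸ twoVarIdeal p q →ₐ[K] AdjoinRootTower p q :=
  liftTwoVarQuot (a := algebraMap (AdjoinRoot p) (AdjoinRootTower p q) (AdjoinRoot.root p))
    (b := AdjoinRoot.root _)
    (by rw [Polynomial.aeval_algebraMap_apply, AdjoinRoot.aeval_eq, AdjoinRoot.mk_self, map_zero])
    (by rw [← Polynomial.aeval_map_algebraMap (AdjoinRoot p), AdjoinRoot.algebraMap_eq,
      AdjoinRoot.aeval_eq, AdjoinRoot.mk_self])

def towerToTwoVarQuot : AdjoinRootTower p q →ₐ[K] MvPolynomial (Fin 2) K ⧸ twoVarIdeal p q :=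
  AdjoinRoot.liftAlgHom _
    (AdjoinRoot.liftAlgHom p (Algebra.ofId K _) (Ideal.Quotient.mk _ (X 0))
      (by rw [Algebra.toRingHom_ofId, ← Polynomial.aeval_def]; exact aeval_mk_X_zero))
    (Ideal.Quotient.mk _ (X 1)) (by
      rw [Polynomial.eval₂_map, ← AdjoinRoot.algebraMap_eq, AlgHom.comp_algebraMap,
        ← Polynomial.aeval_def]
      exact aeval_mk_X_one)

def twoVarQuotEquivTower :
    (MvPolynomial (Fin 2) K ⧸ twoVarIdeal p q) ≃ₐ[K] AdjoinRootTower p q :=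
  AlgEquiv.ofAlgHom (twoVarQuotToTower p q) (towerToTwoVarQuot p q)
    (by ext <;> simp [twoVarQuotToTower, towerToTwoVarQuot])
    (twoVarQuot_algHom_ext (by simp [twoVarQuotToTower, towerToTwoVarQuot])
      (by simp [twoVarQuotToTower, towerToTwoVarQuot]))

end AdjoinRootTower

theorem finrank_adjoinRootTower {K : Type*} [CommRing K] [IsDomain K] {p q : K[X]}
    (hp : p.Monic) (hq : q.Monic) :
    Module.finrank K (AdjoinRootTower p q) = p.natDegree * q.natDegree := by
  let pbR := AdjoinRoot.powerBasis' hp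
  let pbS := AdjoinRoot.powerBasis' (hq.map (AdjoinRoot.of p))
  rw [Module.finrank_eq_card_basis (pbR.basis.smulTower pbS.basis), Fintype.card_prod,
    Fintype.card_fin, Fintype.card_fin, AdjoinRoot.powerBasis'_dim, AdjoinRoot.powerBasis'_dim]
  rcases (p.natDegree).eq_zero_or_pos with hp0 | hp0
  · simp [hp0]
  · have : Nontrivial (AdjoinRoot p) :=
      AdjoinRoot.nontrivial p (Polynomial.degree_ne_of_natDegree_ne hp0.ne')
    rw [hq.natDegree_map]

section Jacobian

variable (K : Type*) [Field K] (k : ℕ)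

abbrev jacobianIdeal : Ideal (MvPolynomial (Fin 3) K) :=
  Ideal.span {C ((k : K) + 1) * X 0 ^ k, 1 + X 2 ^ 2, 2 * X 1 * X 2}

theorem X_zero_pow_mem_jacobianIdeal [CharZero K] : X 0 ^ k ∈ jacobianIdeal K k := by
  have hunit : IsUnit (C ((k : K) + 1) : MvPolynomial (Fin 3) K) :=
    (isUnit_iff_ne_zero.2 (Nat.cast_add_one_ne_zero k)).map C
  exact (Ideal.unit_mul_mem_iff_mem _ hunit).1 (Ideal.subset_span (by simp))

theorem one_add_X_two_sq_mem_jacobianIdeal : 1 + X 2 ^ 2 ∈ jacobianIdeal K k :=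
  Ideal.subset_span (by simp)

theorem X_one_mem_jacobianIdeal [CharZero K] : X 1 ∈ jacobianIdeal K k := by
  have h2 : (C (2⁻¹ : K) : MvPolynomial (Fin 3) K) * 2 = 1 := by
    rw [← map_ofNat C 2, ← C_mul, inv_mul_cancel₀ two_ne_zero, C_1]
  have hX1 : (X 1 : MvPolynomial (Fin 3) K) =
      X 1 * (1 + X 2 ^ 2) - C 2⁻¹ * X 2 * (2 * X 1 * X 2) := by
    linear_combination X 1 * X 2 ^ 2 * h2
  rw [hX1]
  exact Ideal.sub_mem _ (Ideal.mul_mem_left _ _ (one_add_X_two_sq_mem_jacobianIdeal K k))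
    (Ideal.mul_mem_left _ _ (Ideal.subset_span (by simp)))

theorem jacobianIdeal_le_comap_twoVarIdeal :
    jacobianIdeal K k ≤ (twoVarIdeal (Polynomial.X ^ k) (Polynomial.X ^ 2 + 1)).comap
      (aeval ![X 0, 0, X 1] : MvPolynomial (Fin 3) K →ₐ[K] MvPolynomial (Fin 2) K) := by
  rw [Ideal.span_le]
  rintro _ (rfl | rfl | rfl) <;> rw [SetLike.mem_coe, Ideal.mem_comap]
  · simpa using Ideal.mul_mem_left _ (C ((k : K) + 1)) (Ideal.subset_span (by simp))
  · have : Polynomial.aeval (X 1 : MvPolynomial (Fin 2) K) (Polynomial.X ^ 2 + 1) ∈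
        twoVarIdeal (Polynomial.X ^ k) (Polynomial.X ^ 2 + 1) :=
      Ideal.subset_span (Set.mem_insert_of_mem _ rfl)
    simpa [add_comm (1 : MvPolynomial (Fin 2) K)] using this
  · simp

theorem twoVarIdeal_le_comap_jacobianIdeal [CharZero K] :
    twoVarIdeal (Polynomial.X ^ k) (Polynomial.X ^ 2 + 1) ≤ (jacobianIdeal K k).comap
      (aeval ![X 0, X 2] : MvPolynomial (Fin 2) K →ₐ[K] MvPolynomial (Fin 3) K) := by
  rw [Ideal.span_le]
  rintro _ (rfl | rfl) <;> rw [SetLike.mem_coe, Ideal.mem_comap]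
  · simpa using X_zero_pow_mem_jacobianIdeal K k
  · simpa [add_comm] using one_add_X_two_sq_mem_jacobianIdeal K k

def jacobianQuotEquivTwoVarQuot [CharZero K] :
    (MvPolynomial (Fin 3) K ⧸ jacobianIdeal K k) ≃ₐ[K]
      MvPolynomial (Fin 2) K ⧸ twoVarIdeal (Polynomial.X ^ k) (Polynomial.X ^ 2 + 1) :=
  AlgEquiv.ofAlgHom
    (Ideal.quotientMapₐ _ _ (jacobianIdeal_le_comap_twoVarIdeal K k))
    (Ideal.quotientMapₐ _ _ (twoVarIdeal_le_comap_jacobianIdeal K k))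
    (twoVarQuot_algHom_ext (by simp) (by simp))
    (Ideal.Quotient.algHom_ext K (MvPolynomial.algHom_ext fun i ↦ by
      fin_cases i
      · simp
      · simpa using (Ideal.Quotient.eq_zero_iff_mem.2 (X_one_mem_jacobianIdeal K k)).symm
      · simp))

end Jacobian

end

theorem stmt_17_general (k : ℕ) :
    let A := MvPolynomial (Fin 3) ℂ ⧸
      Ideal.span ({C ((k : ℂ) + 1) * X 0 ^ k, 1 + X 2 ^ 2, 2 * X 1 * X 2} :
        Set (MvPolynomial (Fin 3) ℂ))
    let B := MvPolynomial (Fin 2) ℂ ⧸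
      Ideal.span ({X 0 ^ k, X 1 ^ 2 + 1} : Set (MvPolynomial (Fin 2) ℂ))
    Nonempty (A ≃ₐ[ℂ] B) ∧ Module.finrank ℂ A = 2 * k := by
  intro A B
  have hB : twoVarIdeal (Polynomial.X ^ k) (Polynomial.X ^ 2 + 1) =
      Ideal.span ({X 0 ^ k, X 1 ^ 2 + 1} : Set (MvPolynomial (Fin 2) ℂ)) := by
    simp [twoVarIdeal]
  let eAB : A ≃ₐ[ℂ] B :=
    (jacobianQuotEquivTwoVarQuot ℂ k).trans (Ideal.quotientEquivAlgOfEq ℂ hB)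
  refine ⟨⟨eAB⟩, ?_⟩
  have hdeg : (Polynomial.X ^ 2 + 1 : ℂ[X]).natDegree = 2 := by compute_degree!
  rw [(jacobianQuotEquivTwoVarQuot ℂ k).toLinearEquiv.finrank_eq,
    (twoVarQuotEquivTower _ _).toLinearEquiv.finrank_eq,
    finrank_adjoinRootTower (Polynomial.monic_X_pow k) (Polynomial.monic_X_pow_add (by simp)),
    Polynomial.natDegree_X_pow, hdeg, mul_comm]

/-- For `f̄ = y_1^{k+1} + y_2 + y_2 y_3^2` (`k ≥ 1`), the Jacobian algebra
`ℂ[y_1,y_2,y_3]/((k+1)y_1^k, 1 + y_3^2, 2 y_2 y_3)` is isomorphic as a `ℂ`-algebra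
to `ℂ[y_1,y_3]/(y_1^k, y_3^2 + 1)` and has dimension `2k` over `ℂ`. -/
theorem stmt_17 (k : ℕ) (hk : 1 ≤ k) :
    let A := MvPolynomial (Fin 3) ℂ ⧸
      Ideal.span ({C ((k : ℂ) + 1) * X 0 ^ k, 1 + X 2 ^ 2, 2 * X 1 * X 2} :
        Set (MvPolynomial (Fin 3) ℂ))
    let B := MvPolynomial (Fin 2) ℂ ⧸
      Ideal.span ({X 0 ^ k, X 1 ^ 2 + 1} : Set (MvPolynomial (Fin 2) ℂ))
    Nonempty (A ≃ₐ[ℂ] B) ∧ Module.finrank ℂ A = 2 * k :=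
  stmt_17_general k
end

section
/- Let k ≥ 4 and f̄ = y_1^{k-1} + y_1 y_2 + y_2 y_3^2. The Jacobian algebra C[y_1,y_2,y_3]/((k-1)y_1^{k-2} + y_2, y_1 + y_3^2, 2y_2y_3) has C-dimension 2k - 3, and is isomorphic to the algebra A generated over C by elements a, e with relations e^2 = -a, a^{k-2}·e = 0 (so A has basis 1, a, ..., a^{k-2}, e, ae, ..., a^{k-3}e). -/
/-!
In the Jacobian algebra the first two relations eliminate `y₁ = -y₃²` and `y₂ = -c y₁ⁿ`
(with `c = k - 1`, `n = k - 2`), after which `2 y₂ y₃ = 0` says that `2c · y₁ⁿ y₃ = 0`, i.e. that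
`y₃^(2n+1) = 0` up to a unit. Hence the algebra is `R[t]/(t^(2n+1))` with `t = y₃`, of rank
`2n + 1 = 2k - 3`, and with `a = y₁ = -t²`, `e = t` the even and odd powers of `t` are, up to sign,
the `aⁱ` and `aⁱ e`.
-/

open MvPolynomial

namespace OrbifoldDk

variable {R : Type*} [CommRing R]

-- For `n + 1` invertible, the Jacobian ideal of `c/(n+1) y₁^(n+1) + y₁ y₂ + y₂ y₃²`,
-- with `yᵢ₊₁ = X i`.
noncomputable abbrev jacobianIdeal (c : R) (n : ℕ) : Ideal (MvPolynomial (Fin 3) R) :=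
  Ideal.span {C c * X 0 ^ n + X 1, X 0 + X 2 ^ 2, 2 * X 1 * X 2}

variable (c : R) (n : ℕ)

theorem mk_eq_zero_of_mem {p : MvPolynomial (Fin 3) R}
    (hp : p ∈ ({C c * X 0 ^ n + X 1, X 0 + X 2 ^ 2, 2 * X 1 * X 2} : Set _)) :
    Ideal.Quotient.mk (jacobianIdeal c n) p = 0 :=
  Ideal.Quotient.eq_zero_iff_mem.mpr (Ideal.subset_span hp)

theorem mk_X_zero :
    Ideal.Quotient.mk (jacobianIdeal c n) (X 0) =
      -Ideal.Quotient.mk (jacobianIdeal c n) (X 2) ^ 2 := by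
  have h := mk_eq_zero_of_mem c n (p := X 0 + X 2 ^ 2) (by simp)
  rw [map_add, map_pow] at h
  linear_combination h

theorem mk_X_one :
    Ideal.Quotient.mk (jacobianIdeal c n) (X 1) =
      -(algebraMap R _ c * (-Ideal.Quotient.mk (jacobianIdeal c n) (X 2) ^ 2) ^ n) := by
  have h := mk_eq_zero_of_mem c n (p := C c * X 0 ^ n + X 1) (by simp)
  rw [map_add, map_mul, map_pow, mk_X_zero, ← algebraMap_eq, Ideal.Quotient.mk_algebraMap] at h
  linear_combination h

variable {c} in
theorem mk_X_zero_pow_mul_X_two (hc : IsUnit (2 * c)) :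
    Ideal.Quotient.mk (jacobianIdeal c n) (X 0) ^ n * Ideal.Quotient.mk (jacobianIdeal c n) (X 2)
      = 0 := by
  have h := mk_eq_zero_of_mem c n (p := 2 * X 1 * X 2) (by simp)
  rw [map_mul, map_mul, map_ofNat, mk_X_one, ← mk_X_zero] at h
  refine (hc.map (algebraMap R _)).mul_right_eq_zero.mp ?_
  rw [map_mul, map_ofNat]
  linear_combination -h

variable {c} in
theorem mk_X_two_pow_eq_zero (hc : IsUnit (2 * c)) :
    Ideal.Quotient.mk (jacobianIdeal c n) (X 2) ^ (2 * n + 1) = 0 := by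
  have h := mk_X_zero_pow_mul_X_two n hc
  rw [mk_X_zero] at h
  set t := Ideal.Quotient.mk (jacobianIdeal c n) (X 2)
  refine (isUnit_neg_one.pow n).mul_right_eq_zero.mp ?_
  linear_combination h - t * neg_pow (t ^ 2) n

variable {c}

theorem _root_.AdjoinRoot.root_X_pow_pow_eq_zero (m : ℕ) :
    AdjoinRoot.root (Polynomial.X ^ m : Polynomial R) ^ m = 0 := by
  rw [← AdjoinRoot.mk_X, ← map_pow, AdjoinRoot.mk_self]

noncomputable def toAdjoinRoot : MvPolynomial (Fin 3) R ⧸ jacobianIdeal c n →ₐ[R]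
    AdjoinRoot (Polynomial.X ^ (2 * n + 1) : Polynomial R) :=
  let r := AdjoinRoot.root (Polynomial.X ^ (2 * n + 1) : Polynomial R)
  let f := aeval ![-r ^ 2, -(algebraMap R _ c * (-r ^ 2) ^ n), r]
  Ideal.Quotient.liftₐ _ f fun p hp => by
    suffices jacobianIdeal c n ≤ RingHom.ker f from this hp
    have hr : r ^ (2 * n) * r = 0 := by rw [← pow_succ, AdjoinRoot.root_X_pow_pow_eq_zero]
    simp only [Ideal.span_le, Set.insert_subset_iff, Set.singleton_subset_iff, SetLike.mem_coe,
      RingHom.mem_ker]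
    refine ⟨by simp [f], by simp [f], ?_⟩
    simp only [f, map_mul, aeval_X, aeval_ofNat, Matrix.cons_val_one, Matrix.cons_val_zero,
      Matrix.cons_val]
    linear_combination (-2 * algebraMap R _ c * r) * neg_pow (r ^ 2) n -
      (2 * algebraMap R _ c * (-1) ^ n) * hr

noncomputable def ofAdjoinRoot (hc : IsUnit (2 * c)) : AdjoinRoot (Polynomial.X ^ (2 * n + 1) : Polynomial R) →ₐ[R]
    MvPolynomial (Fin 3) R ⧸ jacobianIdeal c n :=
  AdjoinRoot.liftAlgHom _ (Algebra.ofId R _) (Ideal.Quotient.mk _ (X 2)) <| by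
    simpa using mk_X_two_pow_eq_zero n hc

theorem toAdjoinRoot_mk_X (i : Fin 3) :
    toAdjoinRoot n (Ideal.Quotient.mk (jacobianIdeal c n) (X i)) =
      ![-AdjoinRoot.root _ ^ 2, -(algebraMap R _ c * (-AdjoinRoot.root _ ^ 2) ^ n),
        AdjoinRoot.root _] i :=
  aeval_X _ i

theorem ofAdjoinRoot_root (hc : IsUnit (2 * c)) :
    ofAdjoinRoot n hc (AdjoinRoot.root _) = Ideal.Quotient.mk (jacobianIdeal c n) (X 2) :=
  AdjoinRoot.liftAlgHom_root ..

noncomputable def equivAdjoinRoot (hc : IsUnit (2 * c)) : (MvPolynomial (Fin 3) R ⧸ jacobianIdeal c n) ≃ₐ[R]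
    AdjoinRoot (Polynomial.X ^ (2 * n + 1) : Polynomial R) :=
  AlgEquiv.ofAlgHom (toAdjoinRoot n) (ofAdjoinRoot n hc)
    (AdjoinRoot.algHom_ext <| by simp [ofAdjoinRoot_root, toAdjoinRoot_mk_X])
    (Ideal.Quotient.algHom_ext R <| MvPolynomial.algHom_ext fun i => by
      fin_cases i <;> simp [ofAdjoinRoot_root, toAdjoinRoot_mk_X, mk_X_zero, mk_X_one,
        -AdjoinRoot.algebraMap_eq])

noncomputable def powerBasis (hc : IsUnit (2 * c)) : PowerBasis R (MvPolynomial (Fin 3) R ⧸ jacobianIdeal c n) :=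
  (AdjoinRoot.powerBasis' (Polynomial.monic_X_pow _)).map (equivAdjoinRoot n hc).symm

theorem powerBasis_gen (hc : IsUnit (2 * c)) :
    (powerBasis n hc).gen = Ideal.Quotient.mk (jacobianIdeal c n) (X 2) := by
  simp [powerBasis, equivAdjoinRoot, ofAdjoinRoot_root]

theorem powerBasis_dim [Nontrivial R] (hc : IsUnit (2 * c)) :
    (powerBasis n hc).dim = 2 * n + 1 := by
  simp [powerBasis]

end OrbifoldDk

noncomputable def finSumFinEvenOddEquiv (q : ℕ) : Fin (q + 1) ⊕ Fin q ≃ Fin (2 * q + 1) :=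
  Equiv.ofBijective (Sum.elim (fun i => ⟨2 * i, by omega⟩) (fun i => ⟨2 * i + 1, by omega⟩)) <|
    (Fintype.bijective_iff_injective_and_card _).mpr
      ⟨by rintro (i | i) (j | j) h <;> simp [Fin.ext_iff] at h ⊢ <;> omega, by simp; omega⟩

theorem PowerBasis.exists_basis_pow_smul_sq {R S : Type*} [CommRing R] [Ring S] [Algebra R S]
    (pb : PowerBasis R S) (u : Rˣ) {p q : ℕ} (hp : p = q + 1) (hdim : pb.dim = 2 * q + 1) :
    ∃ B : Module.Basis (Fin p ⊕ Fin q) R S,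
      (∀ i : Fin p, B (Sum.inl i) = (u • pb.gen ^ 2) ^ (i : ℕ)) ∧
      ∀ i : Fin q, B (Sum.inr i) = (u • pb.gen ^ 2) ^ (i : ℕ) * pb.gen := by
  subst hp
  refine ⟨(pb.basis.reindex ((finSumFinEvenOddEquiv q).trans (finCongr hdim.symm)).symm).unitsSMul
    (Sum.elim (fun i => u ^ (i : ℕ)) (fun i => u ^ (i : ℕ))), fun i => ?_, fun i => ?_⟩
  · rw [Module.Basis.unitsSMul_apply, Module.Basis.reindex_apply, Equiv.symm_symm, smul_pow,
      ← pow_mul]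
    simp [finSumFinEvenOddEquiv]
  · rw [Module.Basis.unitsSMul_apply, Module.Basis.reindex_apply, Equiv.symm_symm, smul_pow,
      smul_mul_assoc, ← pow_mul, ← pow_succ]
    simp [finSumFinEvenOddEquiv]

/-- For `k ≥ 4` and `f̄ = y_1^{k-1} + y_1 y_2 + y_2 y_3^2`, the Jacobian algebra
`ℂ[y_1,y_2,y_3]/((k-1)y_1^{k-2} + y_2, y_1 + y_3^2, 2 y_2 y_3)` has dimension `2k - 3`
and is the algebra generated by elements `a, e` with relations `e² = -a`,
`a^{k-2} e = 0`, with basis `1, a, …, a^{k-2}, e, a e, …, a^{k-3} e`. -/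
theorem stmt_18 (k : ℕ) (hk : 4 ≤ k) :
    let A := MvPolynomial (Fin 3) ℂ ⧸
      Ideal.span ({C ((k : ℂ) - 1) * X 0 ^ (k - 2) + X 1, X 0 + X 2 ^ 2, 2 * X 1 * X 2} :
        Set (MvPolynomial (Fin 3) ℂ))
    Module.finrank ℂ A = 2 * k - 3 ∧
    ∃ a e : A, e ^ 2 = -a ∧ a ^ (k - 2) * e = 0 ∧
      ∃ B : Module.Basis (Fin (k - 1) ⊕ Fin (k - 2)) ℂ A,
        (∀ i : Fin (k - 1), B (Sum.inl i) = a ^ (i : ℕ)) ∧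
        (∀ i : Fin (k - 2), B (Sum.inr i) = a ^ (i : ℕ) * e) := by
  intro A
  have hc : IsUnit (2 * ((k : ℂ) - 1)) :=
    isUnit_iff_ne_zero.mpr (mul_ne_zero two_ne_zero (sub_ne_zero.mpr (by norm_cast; omega)))
  let pb : PowerBasis ℂ A := OrbifoldDk.powerBasis (k - 2) hc
  obtain ⟨B, hB_inl, hB_inr⟩ :=
    pb.exists_basis_pow_smul_sq (-1) (p := k - 1) (by omega) (OrbifoldDk.powerBasis_dim _ hc)
  have ha : (-1 : ℂˣ) • pb.gen ^ 2 = Ideal.Quotient.mk _ (X 0) := by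
    rw [OrbifoldDk.powerBasis_gen, OrbifoldDk.mk_X_zero]
    simp
  rw [ha] at hB_inl hB_inr
  refine ⟨?_, _, pb.gen, ?_, ?_, B, hB_inl, hB_inr⟩
  · rw [pb.finrank, OrbifoldDk.powerBasis_dim]
    omega
  · rw [OrbifoldDk.powerBasis_gen]
    linear_combination OrbifoldDk.mk_X_zero ((k : ℂ) - 1) (k - 2)
  · rw [OrbifoldDk.powerBasis_gen]
    exact OrbifoldDk.mk_X_zero_pow_mul_X_two _ hc
end
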